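/- Let c, d, t be positive real numbers and let l be a nonnegative integer. If M_l(c,d) ≤ t, then l ≤ t²/(4cd) + (c+d)t/(2cd) + (c−d)²/(4cd). -/
import Mathlib


/-- `Nseq a b k` is the `k`-th term (indexed from 0) of the nondecreasing sequence listing,
with multiplicities, all numbers `m*a + n*b` with `m n : ℕ`; equivalently the least `t ≥ 0`
such that there are at least `k+1` pairs `(m,n)` with `m*a + n*b ≤ t`. -/
noncomputable def Nseq (a b : ℝ) (k : ℕ) : ℝ :=
  sInf {t : ℝ | 0 ≤ t ∧ k + 1 ≤ {p : ℕ × ℕ | (p.1 : ℝ) * a + (p.2 : ℝ) * b ≤ t}.ncard}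

/-- `Mseq c d k = min {m*c + n*d : (m+1)*(n+1) ≥ k+1}`. -/
noncomputable def Mseq (c d : ℝ) (k : ℕ) : ℝ :=
  sInf {t : ℝ | ∃ m n : ℕ, k + 1 ≤ (m + 1) * (n + 1) ∧ t = (m : ℝ) * c + (n : ℝ) * d}

/-- `dFun a b = inf {λ > 0 : N_k(1,a) ≤ λ M_k(1,b) for all k}`. -/
noncomputable def dFun (a b : ℝ) : ℝ :=
  sInf {l : ℝ | 0 < l ∧ ∀ k : ℕ, Nseq 1 a k ≤ l * Mseq 1 b k}

theorem Mseq_index_upper_bound (c d t : ℝ) (hc : 0 < c) (hd : 0 < d) (ht : 0 < t)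
    (l : ℕ) (h : Mseq c d l ≤ t) :
    (l : ℝ) ≤ t ^ 2 / (4 * c * d) + (c + d) * t / (2 * c * d) + (c - d) ^ 2 / (4 * c * d) := by
  set S := {t : ℝ | ∃ m n : ℕ, l + 1 ≤ (m + 1) * (n + 1) ∧ t = (m : ℝ) * c + (n : ℝ) * d} with hSdef
  have hS : ((l : ℝ) * c) ∈ S := ⟨l, 0, by simp, by simp⟩
  set A := Real.sqrt (((l : ℝ) + 1) * (4 * c * d)) with hA
  have hA0 : 0 ≤ A := Real.sqrt_nonneg _
  have hA2 : A ^ 2 = ((l : ℝ) + 1) * (4 * c * d) := Real.sq_sqrt (by positivity)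
  have hbound : ∀ x ∈ S, A - (c + d) ≤ x := by
    rintro x ⟨m, n, hmn, rfl⟩
    have hmn' : ((l : ℝ) + 1) ≤ ((m : ℝ) + 1) * ((n : ℝ) + 1) := by exact_mod_cast hmn
    have hx0 : (0 : ℝ) ≤ (m : ℝ) * c + (n : ℝ) * d := by positivity
    have h1 : ((l : ℝ) + 1) * (4 * c * d) ≤ ((m : ℝ) * c + (n : ℝ) * d + c + d) ^ 2 := by
      nlinarith [sq_nonneg (((m : ℝ) + 1) * c - ((n : ℝ) + 1) * d), mul_pos hc hd]
    have h2 : A ≤ (m : ℝ) * c + (n : ℝ) * d + c + d := by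
      have := Real.sqrt_le_sqrt h1
      rwa [Real.sqrt_sq (by linarith)] at this
    linarith
  have hst : A - (c + d) ≤ Mseq c d l := le_csInf ⟨_, hS⟩ hbound
  have hAt : A ≤ t + c + d := by linarith
  have hkey : ((l : ℝ) + 1) * (4 * c * d) ≤ (t + c + d) ^ 2 := by nlinarith
  have hcd : (0 : ℝ) < c * d := mul_pos hc hd
  rw [div_add_div _ _ (by positivity) (by positivity), div_add_div _ _ (by positivity) (by positivity),
    le_div_iff₀ (by positivity)]
  nlinarith [mul_le_mul_of_nonneg_right hkey (by positivity : (0:ℝ) ≤ 8*c^2*d^2), mul_pos hcd hcd]
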